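/- arXiv:2302.06770 — 3 statements merged into one kernel-verified Lean document; each statement's English description precedes it below -/
import Mathlib

section
/- Kernel Silverman–Toeplitz, sufficiency: let μ be a σ-finite Borel measure on a σ-compact locally compact Hausdorff space E, let F be a locally compact Hausdorff space, and let a : F × E → ℂ be measurable with (1) t ↦ a(r,t) integrable for each r, (2) r ↦ ∫_E |a(r,t)| dμ(t) essentially bounded by M, (3) for every compact K ⊂ E, ∫_K |a(r,t)| dμ(t) → 0 as r → ∞ (along the filter of complements of compact sets in F), and (4) ∫_E a(r,t) dμ(t) → 1 as r → ∞. Then for every bounded strongly measurable v : E → X, with X a Banach space, such that v(t) → x as t → ∞ (along complements of compact sets in E), the Bochner integrals ∫_E a(r,t) v(t) dμ(t) converge to x as r → ∞. -/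
open Filter MeasureTheory

/-- Kernel Silverman–Toeplitz theorem (sufficiency): a kernel `a : F × E → ℂ` satisfying the
four regularity conditions sums every bounded strongly measurable `v : E → X` that converges
at infinity (along the cocompact filter) to its limit. -/
theorem kernel_silverman_toeplitz_sufficiency
    {E F X : Type*}
    [TopologicalSpace E] [MeasurableSpace E] [BorelSpace E]
    [SigmaCompactSpace E] [LocallyCompactSpace E] [T2Space E]
    [TopologicalSpace F] [MeasurableSpace F] [BorelSpace F]
    [LocallyCompactSpace F] [T2Space F]
    [NormedAddCommGroup X] [NormedSpace ℂ X] [CompleteSpace X]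
    (μ : Measure E) [SigmaFinite μ]
    (a : F → E → ℂ) (hmeas : Measurable (Function.uncurry a))
    (h1 : ∀ r, Integrable (a r) μ)
    (h2 : ∃ M : ℝ, ∀ r, (∫ t, ‖a r t‖ ∂μ) ≤ M)
    (h3 : ∀ K : Set E, IsCompact K →
      Tendsto (fun r => ∫ t in K, ‖a r t‖ ∂μ) (cocompact F) (nhds 0))
    (h4 : Tendsto (fun r => ∫ t, a r t ∂μ) (cocompact F) (nhds 1)) :
    ∀ (v : E → X) (x : X), StronglyMeasurable v → (∃ C : ℝ, ∀ t, ‖v t‖ ≤ C) →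
      Tendsto v (cocompact E) (nhds x) →
      Tendsto (fun r => ∫ t, a r t • v t ∂μ) (cocompact F) (nhds x) := by
  intro v x hv hCb hvx
  obtain ⟨C, hC⟩ := hCb
  obtain ⟨M, hM⟩ := h2
  set M' : ℝ := max M 0 with hM'def
  have hM' : ∀ r, (∫ t, ‖a r t‖ ∂μ) ≤ M' := fun r => (hM r).trans (le_max_left _ _)
  have hM'0 : 0 ≤ M' := le_max_right _ _
  set w : E → X := fun t => v t - x with hw
  have hwm : StronglyMeasurable w := hv.sub stronglyMeasurable_const
  set D : ℝ := |C| + ‖x‖ with hD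
  have hD0 : 0 ≤ D := add_nonneg (abs_nonneg _) (norm_nonneg _)
  have hwb : ∀ t, ‖w t‖ ≤ D := by
    intro t
    calc ‖v t - x‖ ≤ ‖v t‖ + ‖x‖ := norm_sub_le _ _
      _ ≤ |C| + ‖x‖ := by
          gcongr
          exact (hC t).trans (le_abs_self C)
  have hw0 : Tendsto w (cocompact E) (nhds 0) := by
    simpa using hvx.sub (tendsto_const_nhds (x := x))
  -- integrability
  have hint : ∀ r, Integrable (fun t => a r t • w t) μ := by
    intro r
    refine Integrable.mono' ((h1 r).norm.const_mul D)
      ((h1 r).aestronglyMeasurable.smul hwm.aestronglyMeasurable)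
      (Filter.Eventually.of_forall fun t => ?_)
    rw [norm_smul, mul_comm D]
    exact mul_le_mul_of_nonneg_left (hwb t) (norm_nonneg (a r t))
  have hintn : ∀ r, Integrable (fun t => ‖a r t‖ * ‖w t‖) μ := by
    intro r
    refine Integrable.mono' ((h1 r).norm.const_mul D)
      ((h1 r).norm.aestronglyMeasurable.mul hwm.norm.aestronglyMeasurable)
      (Filter.Eventually.of_forall fun t => ?_)
    rw [Real.norm_eq_abs, abs_of_nonneg (mul_nonneg (norm_nonneg _) (norm_nonneg _)),
      mul_comm D]
    exact mul_le_mul_of_nonneg_left (hwb t) (norm_nonneg (a r t))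
  -- key: the w-part tends to 0
  have key : Tendsto (fun r => ∫ t, a r t • w t ∂μ) (cocompact F) (nhds 0) := by
    rw [NormedAddCommGroup.tendsto_nhds_zero]
    intro ε hε
    set δ : ℝ := ε / (2 * (M' + 1)) with hδdef
    have hδ : 0 < δ := by positivity
    obtain ⟨K, hK, hKw⟩ := (hasBasis_cocompact.eventually_iff).mp
      (hw0.eventually (Metric.eventually_nhds_iff.mpr
        ⟨δ, hδ, fun {y} hy => hy⟩) : ∀ᶠ t in cocompact E, dist (w t) 0 < δ)
    have hKm : MeasurableSet K := hK.measurableSet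
    have hδ2 : 0 < ε / (2 * (D + 1)) := by positivity
    have hev : ∀ᶠ r in cocompact F, (∫ t in K, ‖a r t‖ ∂μ) < ε / (2 * (D + 1)) := by
      have := h3 K hK
      exact this.eventually (Filter.Tendsto.eventually_lt_const hδ2 tendsto_id) |>.mono fun r h => h
    filter_upwards [hev] with r hr
    have hnorm : ‖∫ t, a r t • w t ∂μ‖ ≤ ∫ t, ‖a r t‖ * ‖w t‖ ∂μ := by
      calc ‖∫ t, a r t • w t ∂μ‖ ≤ ∫ t, ‖a r t • w t‖ ∂μ := norm_integral_le_integral_norm _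
        _ = ∫ t, ‖a r t‖ * ‖w t‖ ∂μ := by simp [norm_smul]
    have hsplit : (∫ t, ‖a r t‖ * ‖w t‖ ∂μ)
        = (∫ t in K, ‖a r t‖ * ‖w t‖ ∂μ) + ∫ t in Kᶜ, ‖a r t‖ * ‖w t‖ ∂μ :=
      (integral_add_compl hKm (hintn r)).symm
    have hKpart : (∫ t in K, ‖a r t‖ * ‖w t‖ ∂μ) ≤ D * ∫ t in K, ‖a r t‖ ∂μ := by
      rw [← integral_const_mul]
      refine setIntegral_mono_on ((hintn r).integrableOn)
        (((h1 r).norm.const_mul D).integrableOn) hKm (fun t _ => ?_)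
      rw [mul_comm D]
      exact mul_le_mul_of_nonneg_left (hwb t) (norm_nonneg (a r t))
    have hCpart : (∫ t in Kᶜ, ‖a r t‖ * ‖w t‖ ∂μ) ≤ δ * M' := by
      calc (∫ t in Kᶜ, ‖a r t‖ * ‖w t‖ ∂μ) ≤ ∫ t in Kᶜ, δ * ‖a r t‖ ∂μ := by
            refine setIntegral_mono_on ((hintn r).integrableOn)
              (((h1 r).norm.const_mul δ).integrableOn) hKm.compl (fun t ht => ?_)
            rw [mul_comm δ]
            refine mul_le_mul_of_nonneg_left ?_ (norm_nonneg _)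
            have := hKw ht
            simpa [dist_eq_norm] using this.le
        _ = δ * ∫ t in Kᶜ, ‖a r t‖ ∂μ := integral_const_mul _ _
        _ ≤ δ * ∫ t, ‖a r t‖ ∂μ := by
            refine mul_le_mul_of_nonneg_left ?_ hδ.le
            exact setIntegral_le_integral (h1 r).norm
              (Filter.Eventually.of_forall fun t => norm_nonneg _)
        _ ≤ δ * M' := mul_le_mul_of_nonneg_left (hM' r) hδ.le
    have h1' : D * (∫ t in K, ‖a r t‖ ∂μ) < ε / 2 := by
      calc D * (∫ t in K, ‖a r t‖ ∂μ) ≤ (D + 1) * (∫ t in K, ‖a r t‖ ∂μ) := by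
            refine mul_le_mul_of_nonneg_right (by linarith) ?_
            exact setIntegral_nonneg hKm fun t _ => norm_nonneg _
        _ < (D + 1) * (ε / (2 * (D + 1))) := by
            refine (mul_lt_mul_iff_right₀ (by positivity)).mpr hr
        _ = ε / 2 := by field_simp
    have h2' : δ * M' < ε / 2 := by
      rw [hδdef]
      calc ε / (2 * (M' + 1)) * M' < ε / (2 * (M' + 1)) * (M' + 1) := by
            refine (mul_lt_mul_iff_right₀ (by positivity)).mpr (by linarith)
        _ = ε / 2 := by field_simp
    calc ‖∫ t, a r t • w t ∂μ‖ ≤ ∫ t, ‖a r t‖ * ‖w t‖ ∂μ := hnorm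
      _ = (∫ t in K, ‖a r t‖ * ‖w t‖ ∂μ) + ∫ t in Kᶜ, ‖a r t‖ * ‖w t‖ ∂μ := hsplit
      _ ≤ D * (∫ t in K, ‖a r t‖ ∂μ) + δ * M' := add_le_add hKpart hCpart
      _ < ε / 2 + ε / 2 := add_lt_add h1' h2'
      _ = ε := by ring
  -- combine
  have heq : ∀ r, (∫ t, a r t • v t ∂μ)
      = (∫ t, a r t • w t ∂μ) + (∫ t, a r t ∂μ) • x := by
    intro r
    rw [← integral_smul_const, ← integral_add (hint r) ((h1 r).smul_const x)]
    congr 1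
    ext t
    simp [hw, smul_sub]
  have := key.add (h4.smul_const x)
  simp only [heq]
  simpa using this
end

section
/- Kernel Silverman–Toeplitz, necessity of integrability and limit of mass: if a : F × E → ℂ is a measurable kernel such that for every bounded strongly measurable v : E → X converging at infinity to x, the weak integral ∫_E a(r,t)v(t)dμ(t) exists for all r ∈ F and converges to x as r → ∞, then for each r ∈ F the function t ↦ a(r,t) belongs to L¹(E, μ), and ∫_E a(r,t) dμ(t) → 1 as r → ∞. -/
open Filter MeasureTheory

/-- Kernel Silverman–Toeplitz theorem, necessity of conditions (1) and (4): if the kernel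
method given by `a : F × E → ℂ` sums (via weak/Pettis integrals) every bounded strongly
measurable function converging at infinity to its limit, then each `t ↦ a r t` is
integrable and the total masses `∫ a r t dμ` tend to `1` at infinity. -/
theorem kernel_silverman_toeplitz_necessity
    {E F X : Type*}
    [TopologicalSpace E] [MeasurableSpace E] [BorelSpace E]
    [SigmaCompactSpace E] [LocallyCompactSpace E] [T2Space E] [NoncompactSpace E]
    [TopologicalSpace F] [LocallyCompactSpace F] [T2Space F] [NoncompactSpace F]
    [NormedAddCommGroup X] [NormedSpace ℂ X] [CompleteSpace X] [Nontrivial X]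
    (μ : Measure E) [IsFiniteMeasureOnCompacts μ]
    (a : F → E → ℂ)
    (hreg : ∀ (v : E → X) (x : X), StronglyMeasurable v → (∃ C : ℝ, ∀ t, ‖v t‖ ≤ C) →
      Tendsto v (cocompact E) (nhds x) →
      ∃ I : F → X,
        (∀ r, ∀ φ : X →L[ℂ] ℂ,
          Integrable (fun t => a r t * φ (v t)) μ ∧
            (∫ t, a r t * φ (v t) ∂μ) = φ (I r)) ∧
        Tendsto I (cocompact F) (nhds x)) :
    (∀ r, Integrable (a r) μ) ∧
      Tendsto (fun r => ∫ t, a r t ∂μ) (cocompact F) (nhds 1) := by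
  obtain ⟨x₀, hx₀⟩ := exists_ne (0 : X)
  obtain ⟨φ, hφ1, hφ2⟩ := exists_dual_vector ℂ x₀ (norm_ne_zero_iff.mpr hx₀)
  set ψ : X →L[ℂ] ℂ := ((‖x₀‖ : ℂ)⁻¹) • φ with hψ
  have hψx : ψ x₀ = 1 := by
    have : (‖x₀‖ : ℂ) ≠ 0 := by
      exact_mod_cast norm_ne_zero_iff.mpr hx₀
    simp [hψ, hφ2, inv_mul_cancel₀ this]
  obtain ⟨I, hI, hItend⟩ := hreg (fun _ => x₀) x₀ stronglyMeasurable_const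
    ⟨‖x₀‖, fun _ => le_refl _⟩ tendsto_const_nhds
  have key : ∀ r, Integrable (a r) μ ∧ (∫ t, a r t ∂μ) = ψ (I r) := by
    intro r
    obtain ⟨hint, heq⟩ := hI r ψ
    simp only [hψx, mul_one] at hint heq
    exact ⟨hint, heq⟩
  refine ⟨fun r => (key r).1, ?_⟩
  have : Tendsto (fun r => ψ (I r)) (cocompact F) (nhds (ψ x₀)) :=
    (ψ.continuous.tendsto x₀).comp hItend
  rw [hψx] at this
  exact this.congr fun r => ((key r).2).symm
end

section
/- Inclusion theorem for matrix-summability methods applied to operator sequences: let X, Y be Banach spaces, S, S_n : X → Y bounded linear operators with S_n(w) → S(w) for all w in a dense subset W of X, and suppose (S_n(x))_n is A-summable to S(x) for all x ∈ X, where A = (a_{m,n}) is a matrix summability method. If A is scalar-included in another matrix method B = (b_{m,n}) (i.e., every complex sequence that is A-summable to L is B-summable to L, and the B-transform exists whenever the A-transform does) and B is regular, then (S_n(x))_n is B-summable to S(x) for all x ∈ X. -/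
open Filter

/-- A sequence `v` in a normed space is summable to `L` by the matrix method `a` if all the
transformed sums exist (unconditionally) and tend to `L`. -/
def MatSummableTo {Z : Type*} [NormedAddCommGroup Z] [NormedSpace ℂ Z]
    (a : ℕ → ℕ → ℂ) (v : ℕ → Z) (L : Z) : Prop :=
  (∀ m, Summable fun n => a m n • v n) ∧
    Tendsto (fun m => ∑' n, a m n • v n) atTop (nhds L)

/-- A weakly bounded family in a normed space is norm-bounded. -/
lemma exists_norm_bound_of_weak_bound {Y : Type*} [NormedAddCommGroup Y] [NormedSpace ℂ Y]
    {ι : Type*} (y : ι → Y)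
    (h : ∀ φ : Y →L[ℂ] ℂ, ∃ C, ∀ i, ‖φ (y i)‖ ≤ C) : ∃ C, ∀ i, ‖y i‖ ≤ C := by
  obtain ⟨C, hC⟩ := banach_steinhaus
    (g := fun i => NormedSpace.inclusionInDoubleDual ℂ Y (y i))
    (fun φ => by obtain ⟨C, hC⟩ := h φ; exact ⟨C, fun i => by simpa using hC i⟩)
  refine ⟨C, fun i => ?_⟩
  have hnorm : ‖NormedSpace.inclusionInDoubleDual ℂ Y (y i)‖ = ‖y i‖ :=
    (NormedSpace.inclusionInDoubleDualLi ℂ (E := Y)).norm_map (y i)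
  rw [← hnorm]; exact hC i

/-- Inclusion theorem for matrix-summability of operator sequences: if `S_n w → S w` on a
dense set, `(S_n x)` is `A`-summable to `S x` for all `x`, `A` is scalar-included in `B`,
and `B` is regular, then `(S_n x)` is `B`-summable to `S x` for all `x`. -/
theorem matrix_inclusion_operator_sequences
    {X Y : Type*} [NormedAddCommGroup X] [NormedSpace ℂ X] [CompleteSpace X]
    [NormedAddCommGroup Y] [NormedSpace ℂ Y] [CompleteSpace Y]
    (a b : ℕ → ℕ → ℂ)
    (S : X →L[ℂ] Y) (Sn : ℕ → X →L[ℂ] Y)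
    (W : Set X) (hW : Dense W)
    (hdense : ∀ w ∈ W, Tendsto (fun n => Sn n w) atTop (nhds (S w)))
    (hA : ∀ x : X, MatSummableTo a (fun n => Sn n x) (S x))
    (hscalar : ∀ (v : ℕ → ℂ) (L : ℂ), MatSummableTo a v L → MatSummableTo b v L)
    (hdom : ∀ v : ℕ → ℂ, (∀ m, Summable fun n => a m n • v n) →
      ∀ m, Summable fun n => b m n • v n)
    (hBreg : ∀ (v : ℕ → Y) (L : Y), Tendsto v atTop (nhds L) → MatSummableTo b v L) :
    ∀ x : X, MatSummableTo b (fun n => Sn n x) (S x) := by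
  classical
  -- Scalar A-summability of `φ (Sn n x)`.
  have hAv : ∀ (x : X) (φ : Y →L[ℂ] ℂ),
      MatSummableTo a (fun n => φ (Sn n x)) (φ (S x)) := by
    intro x φ
    obtain ⟨h1, h2⟩ := hA x
    constructor
    · intro m
      simpa only [Function.comp_def, map_smul] using (h1 m).map φ φ.continuous
    · have heq : ∀ m, φ (∑' n, a m n • Sn n x) = ∑' n, a m n • φ (Sn n x) := by
        intro m
        rw [φ.map_tsum (h1 m)]
        exact tsum_congr fun n => map_smul φ _ _
      have := (φ.continuous.tendsto (S x)).comp h2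
      simpa only [Function.comp_def, heq] using this
  have hBv : ∀ (x : X) (φ : Y →L[ℂ] ℂ),
      MatSummableTo b (fun n => φ (Sn n x)) (φ (S x)) :=
    fun x φ => hscalar _ _ (hAv x φ)
  have hbφsum : ∀ (x : X) (φ : Y →L[ℂ] ℂ) (m : ℕ),
      Summable fun n => ‖b m n • φ (Sn n x)‖ :=
    fun x φ m => summable_norm_iff.mpr ((hBv x φ).1 m)
  -- Uniform bounds for partial-sum operators, for fixed `m`.
  have hTbound : ∀ m, ∃ C : ℝ, 0 ≤ C ∧
      ∀ (F : Finset ℕ) (z : X), ‖∑ n ∈ F, b m n • Sn n z‖ ≤ C * ‖z‖ := by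
    intro m
    have happ : ∀ (F : Finset ℕ) (z : X),
        (∑ n ∈ F, b m n • Sn n) z = ∑ n ∈ F, b m n • Sn n z := by
      intro F z
      simp [ContinuousLinearMap.sum_apply]
    have hpt : ∀ z : X, ∃ C, ∀ F : Finset ℕ, ‖(∑ n ∈ F, b m n • Sn n) z‖ ≤ C := by
      intro z
      apply exists_norm_bound_of_weak_bound
      intro φ
      refine ⟨∑' n, ‖b m n • φ (Sn n z)‖, fun F => ?_⟩
      have h1 : φ ((∑ n ∈ F, b m n • Sn n) z) = ∑ n ∈ F, b m n • φ (Sn n z) := by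
        rw [happ, map_sum]
        exact Finset.sum_congr rfl fun n _ => map_smul φ _ _
      rw [h1]
      calc ‖∑ n ∈ F, b m n • φ (Sn n z)‖ ≤ ∑ n ∈ F, ‖b m n • φ (Sn n z)‖ :=
            norm_sum_le _ _
        _ ≤ ∑' n, ‖b m n • φ (Sn n z)‖ :=
            Summable.sum_le_tsum F (fun n _ => norm_nonneg _) (hbφsum z φ m)
    obtain ⟨C, hC⟩ := banach_steinhaus hpt
    refine ⟨max C 0, le_max_right _ _, fun F z => ?_⟩
    calc ‖∑ n ∈ F, b m n • Sn n z‖ = ‖(∑ n ∈ F, b m n • Sn n) z‖ := by rw [happ]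
      _ ≤ ‖∑ n ∈ F, b m n • Sn n‖ * ‖z‖ := (∑ n ∈ F, b m n • Sn n).le_opNorm z
      _ ≤ max C 0 * ‖z‖ :=
          mul_le_mul_of_nonneg_right ((hC F).trans (le_max_left _ _)) (norm_nonneg _)
  choose Cb hCb0 hCb using hTbound
  -- Summability of the B-transform for every `x` and `m`.
  have hsum : ∀ (m : ℕ) (x : X), Summable fun n => b m n • Sn n x := by
    intro m x
    rw [summable_iff_vanishing_norm]
    intro ε hε
    obtain ⟨w, hwW, hwx⟩ := Metric.mem_closure_iff.mp (hW x) (ε / (2 * (Cb m + 1)))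
      (div_pos hε (by nlinarith [hCb0 m]))
    have hWsum : Summable fun n => b m n • Sn n w := (hBreg _ _ (hdense w hwW)).1 m
    obtain ⟨s, hs⟩ := summable_iff_vanishing_norm.mp hWsum (ε / 2) (by positivity)
    refine ⟨s, fun t ht => ?_⟩
    have split : ∀ n, b m n • Sn n x = b m n • Sn n (x - w) + b m n • Sn n w := by
      intro n
      rw [map_sub, smul_sub, sub_add_cancel]
    have hxw : ‖x - w‖ < ε / (2 * (Cb m + 1)) := by
      rw [← dist_eq_norm]; exact hwx
    have hterm1 : ‖∑ n ∈ t, b m n • Sn n (x - w)‖ ≤ ε / 2 := by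
      calc ‖∑ n ∈ t, b m n • Sn n (x - w)‖ ≤ Cb m * ‖x - w‖ := hCb m t (x - w)
        _ ≤ Cb m * (ε / (2 * (Cb m + 1))) :=
            mul_le_mul_of_nonneg_left hxw.le (hCb0 m)
        _ ≤ ε / 2 := by
            have hD : (0:ℝ) < 2 * (Cb m + 1) := by nlinarith [hCb0 m]
            have h1 : Cb m * (ε / (2 * (Cb m + 1))) = (Cb m * ε) / (2 * (Cb m + 1)) := by
              ring
            rw [h1, div_le_div_iff₀ hD two_pos]
            nlinarith [hCb0 m, hε.le]
    calc ‖∑ n ∈ t, b m n • Sn n x‖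
        = ‖∑ n ∈ t, b m n • Sn n (x - w) + ∑ n ∈ t, b m n • Sn n w‖ := by
          rw [← Finset.sum_add_distrib]
          exact congrArg _ (Finset.sum_congr rfl fun n _ => split n)
      _ ≤ ‖∑ n ∈ t, b m n • Sn n (x - w)‖ + ‖∑ n ∈ t, b m n • Sn n w‖ := norm_add_le _ _
      _ < ε / 2 + ε / 2 := by
          have := hs t ht
          exact add_lt_add_of_le_of_lt hterm1 this
      _ = ε := by ring
  -- The B-transform operators.
  let U : ℕ → X →L[ℂ] Y := fun m =>
    LinearMap.mkContinuousOfExistsBound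
      { toFun := fun x => ∑' n, b m n • Sn n x
        map_add' := by
          intro x y
          rw [← Summable.tsum_add (hsum m x) (hsum m y)]
          exact tsum_congr fun n => by rw [map_add, smul_add]
        map_smul' := by
          intro c x
          simp only [RingHom.id_apply]
          rw [← Summable.tsum_const_smul c (hsum m x)]
          exact tsum_congr fun n => by rw [map_smul, smul_comm] }
      ⟨Cb m, by
        intro x
        refine le_of_tendsto ((hsum m x).hasSum.norm) ?_
        exact Filter.Eventually.of_forall fun F => hCb m F x⟩
  have hU_apply : ∀ (m : ℕ) (x : X), U m x = ∑' n, b m n • Sn n x := fun m x => rfl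
  -- Uniform bound on the `U m`.
  have hUpt : ∀ x : X, ∃ C, ∀ m, ‖U m x‖ ≤ C := by
    intro x
    apply exists_norm_bound_of_weak_bound (y := fun m => U m x)
    intro φ
    have heq : ∀ m, φ (U m x) = ∑' n, b m n • φ (Sn n x) := by
      intro m
      rw [hU_apply, φ.map_tsum (hsum m x)]
      exact tsum_congr fun n => map_smul φ _ _
    have htd : Tendsto (fun m => ‖φ (U m x)‖) atTop (nhds ‖φ (S x)‖) := by
      have h2 := (hBv x φ).2
      have : Tendsto (fun m => φ (U m x)) atTop (nhds (φ (S x))) := by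
        simpa only [heq] using h2
      exact this.norm
    obtain ⟨C, hC⟩ := htd.bddAbove_range
    exact ⟨C, fun m => hC ⟨m, rfl⟩⟩
  obtain ⟨K, hK⟩ := banach_steinhaus hUpt
  set K' := max K 0 with hK'def
  have hK' : ∀ m, ‖U m‖ ≤ K' := fun m => (hK m).trans (le_max_left _ _)
  have hK'0 : 0 ≤ K' := le_max_right _ _
  -- Conclusion.
  intro x
  refine ⟨fun m => hsum m x, ?_⟩
  have key : Tendsto (fun m => U m x) atTop (nhds (S x)) := by
    rw [Metric.tendsto_atTop]
    intro ε hε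
    set δ := ε / (2 * (K' + ‖S‖ + 1)) with hδdef
    have hδ : 0 < δ := by
      rw [hδdef]
      exact div_pos hε (by nlinarith [norm_nonneg S, hK'0])
    obtain ⟨w, hwW, hwx⟩ := Metric.mem_closure_iff.mp (hW x) δ hδ
    have hxw : ‖x - w‖ < δ := by rw [← dist_eq_norm]; exact hwx
    have hmid : Tendsto (fun m => U m w) atTop (nhds (S w)) := by
      have := (hBreg _ _ (hdense w hwW)).2
      simpa only [← hU_apply] using this
    rw [Metric.tendsto_atTop] at hmid
    obtain ⟨N, hN⟩ := hmid (ε / 2) (by positivity)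
    refine ⟨N, fun m hm => ?_⟩
    have h1 : dist (U m x) (U m w) ≤ K' * δ := by
      rw [dist_eq_norm, ← map_sub]
      calc ‖U m (x - w)‖ ≤ ‖U m‖ * ‖x - w‖ := (U m).le_opNorm _
        _ ≤ K' * δ := mul_le_mul (hK' m) hxw.le (norm_nonneg _) hK'0
    have h2 : dist (U m w) (S w) < ε / 2 := hN m hm
    have h3 : dist (S w) (S x) ≤ ‖S‖ * δ := by
      rw [dist_eq_norm, ← map_sub]
      calc ‖S (w - x)‖ ≤ ‖S‖ * ‖w - x‖ := S.le_opNorm _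
        _ ≤ ‖S‖ * δ := by
            rw [norm_sub_rev]
            exact mul_le_mul_of_nonneg_left hxw.le (norm_nonneg _)
    have htri := dist_triangle4 (U m x) (U m w) (S w) (S x)
    have hsmall : K' * δ + ‖S‖ * δ ≤ ε / 2 := by
      have hD : (0:ℝ) < 2 * (K' + ‖S‖ + 1) := by nlinarith [norm_nonneg S, hK'0]
      have h1 : K' * δ + ‖S‖ * δ = ((K' + ‖S‖) * ε) / (2 * (K' + ‖S‖ + 1)) := by
        rw [hδdef]; ring
      rw [h1, div_le_div_iff₀ hD two_pos]
      nlinarith [norm_nonneg S, hK'0, hε.le]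
    calc dist (U m x) (S x) ≤ dist (U m x) (U m w) + dist (U m w) (S w) + dist (S w) (S x) :=
          htri
      _ < K' * δ + ε / 2 + ‖S‖ * δ := by
          have := add_lt_add_of_lt_of_le (add_lt_add_of_le_of_lt h1 h2) h3
          linarith
      _ ≤ ε := by linarith
  simpa only [hU_apply] using key
end
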